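/- The equation 1/t_x + 1/t_y = 2/t_z has infinitely many solutions in positive integers x, y, z with x < z < y, where t_n = n(n+1)/2; i.e., there are infinitely many three-term arithmetic progressions 1/t_x, 1/t_z, 1/t_y. -/

import Mathlib

/-!
For any `T ∉ {0, -1}` one has `1 / ((T + 1) / 2) + 1 / t_T = 2 / T`, where `t_T = T (T + 1) / 2`.
Taking `T = t_z` shows that `(x, t_z, z)` is a solution as soon as `2 t_x = t_z + 1`, i.e.
`2 (2x + 1)² - (2z + 1)² = 9`. This Pell-type equation has the solution `(1, 1)`, and the
automorph `(x, z) ↦ (3x + 2z + 2, 4x + 3z + 3)` of `2u² - v²` produces arbitrarily large ones.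
-/

/-- The n-th triangular number, as a rational. -/
def tri (n : ℕ) : ℚ := n * (n + 1) / 2

lemma one_div_add_one_div_triangle {K : Type*} [Field K] [CharZero K] {T : K}
    (hT : T ≠ 0) (hT' : T + 1 ≠ 0) :
    1 / ((T + 1) / 2) + 1 / (T * (T + 1) / 2) = 2 / T := by
  field_simp

lemma cast_triangle (n : ℕ) : ((n * (n + 1) / 2 : ℕ) : ℚ) = tri n := by
  rw [Nat.cast_div (Nat.even_mul_succ_self n).two_dvd two_ne_zero, tri]
  push_cast
  ring

lemma tri_triangle (n : ℕ) : tri (n * (n + 1) / 2) = tri n * (tri n + 1) / 2 := by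
  rw [tri, cast_triangle]

lemma lt_triangle {n : ℕ} (hn : 2 ≤ n) : n < n * (n + 1) / 2 := by
  rw [Nat.lt_div_iff_mul_lt' (Nat.even_mul_succ_self n).two_dvd]
  nlinarith

def IsPellPair (a b : ℕ) : Prop := 2 * a * (a + 1) = b * (b + 1) + 2

namespace IsPellPair

variable {a b : ℕ}

lemma step (h : IsPellPair a b) : IsPellPair (3 * a + 2 * b + 2) (4 * a + 3 * b + 3) := by
  unfold IsPellPair at *
  linear_combination h

lemma lt (h : IsPellPair a b) (ha : 2 ≤ a) : a < b := by
  unfold IsPellPair at h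
  nlinarith

lemma two_mul_tri (h : IsPellPair a b) : 2 * tri a = tri b + 1 := by
  have h' : 2 * (a : ℚ) * (a + 1) = b * (b + 1) + 2 := by exact_mod_cast h
  unfold tri
  linear_combination h' / 2

lemma one_div_tri_add_one_div_tri_triangle (h : IsPellPair a b) (hb : 0 < b) :
    1 / tri a + 1 / tri (b * (b + 1) / 2) = 2 / tri b := by
  have hT : tri b ≠ 0 := by unfold tri; positivity
  have hT' : tri b + 1 ≠ 0 := by unfold tri; positivity
  rw [tri_triangle, ← one_div_add_one_div_triangle hT hT', ← h.two_mul_tri]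
  ring

end IsPellPair

lemma exists_isPellPair_gt (N : ℕ) : ∃ a b, N < a ∧ IsPellPair a b := by
  induction N with
  | zero => exact ⟨1, 1, one_pos, rfl⟩
  | succ N ih =>
    obtain ⟨a, b, hN, hab⟩ := ih
    exact ⟨_, _, by omega, hab.step⟩

theorem harmonic_triangular_infinitely_many :
    {p : ℕ × ℕ × ℕ | 0 < p.1 ∧ p.1 < p.2.2 ∧ p.2.2 < p.2.1 ∧
      1 / tri p.1 + 1 / tri p.2.1 = 2 / tri p.2.2}.Infinite := by
  refine Set.Infinite.of_image Prod.fst (Set.infinite_of_forall_exists_gt fun N => ?_)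
  obtain ⟨a, b, hN, hab⟩ := exists_isPellPair_gt (N + 1)
  have hlt : a < b := hab.lt (by omega)
  refine ⟨a, ⟨(a, b * (b + 1) / 2, b), ?_, rfl⟩, show N < a by omega⟩
  exact ⟨by omega, hlt, lt_triangle (show 2 ≤ b by omega),
    hab.one_div_tri_add_one_div_tri_triangle (show 0 < b by omega)⟩
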